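/- Let R be a ℤ₊-ring satisfying the ascending chain condition on Serre ideals, let I be a proper Serre ideal, and let P be a Serre prime ideal containing I. Then there exists a Serre prime ideal P' minimal among Serre prime ideals containing I such that I ⊆ P' ⊆ P. Moreover, there are only finitely many Serre prime ideals minimal over I. -/

import Mathlib

/-!
Minimal primes below a given one exist by Zorn's lemma, since the intersection of a chain of
Serre primes is again a Serre prime. For finiteness, the ACC lets one argue by well-founded
induction downwards that every Serre ideal `J` admits a finite set of Serre primes over it such
that every Serre prime over `J` contains one of them: a non-prime proper `J` has Serre ideals
`A, B ⊋ J` with `AB ⊆ J`, so every prime over `J` lies over `A` or over `B`, and the covers of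
`A` and `B` combine. Every minimal prime over `J` then belongs to the cover.
-/

variable {Γ R : Type*}

/-- The positive cone `R₊` of a `ℤ₊`-ring with basis `b`. -/
def ZPos [NonUnitalRing R] (b : Module.Basis Γ ℤ R) : Set R :=
  {r | ∀ γ : Γ, 0 ≤ b.repr r γ}

/-- The structure constants of the multiplication with respect to `b` are nonnegative,
i.e. `(R, b)` is a `ℤ₊`-ring. -/
def PosBasis [NonUnitalRing R] (b : Module.Basis Γ ℤ R) : Prop :=
  ∀ α β γ : Γ, 0 ≤ b.repr (b α * b β) γ

/-- A Serre ideal: a two-sided ideal of the form `⨁_{γ ∈ Γ'} ℤ b_γ`. -/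
def IsSerreIdeal [NonUnitalRing R] (b : Module.Basis Γ ℤ R) (I : Set R) : Prop :=
  (∃ Γ' : Set Γ, I = ↑(Submodule.span ℤ (⇑b '' Γ'))) ∧
  (∀ r ∈ I, ∀ s : R, s * r ∈ I) ∧
  (∀ r ∈ I, ∀ s : R, r * s ∈ I)

/-- A Serre prime ideal: a proper Serre ideal `P` such that for all Serre ideals
`I, J`, `IJ ⊆ P` implies `I ⊆ P` or `J ⊆ P`. -/
def IsSerrePrime [NonUnitalRing R] (b : Module.Basis Γ ℤ R) (P : Set R) : Prop :=
  IsSerreIdeal b P ∧ P ≠ Set.univ ∧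
    ∀ I J : Set R, IsSerreIdeal b I → IsSerreIdeal b J →
      (∀ x ∈ I, ∀ y ∈ J, x * y ∈ P) → I ⊆ P ∨ J ⊆ P

open Pointwise

section SerreIdeals

variable [NonUnitalRing R] {b : Module.Basis Γ ℤ R}

lemma IsSerreIdeal.zero_mem {I : Set R} (hI : IsSerreIdeal b I) : (0 : R) ∈ I := by
  obtain ⟨Γ', rfl⟩ := hI.1
  exact Submodule.zero_mem _

lemma IsSerreIdeal.add_mem {I : Set R} (hI : IsSerreIdeal b I) {x y : R} (hx : x ∈ I)
    (hy : y ∈ I) : x + y ∈ I := by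
  obtain ⟨Γ', rfl⟩ := hI.1
  exact Submodule.add_mem _ hx hy

lemma IsSerreIdeal.add {I J : Set R} (hI : IsSerreIdeal b I) (hJ : IsSerreIdeal b J) :
    IsSerreIdeal b (I + J) := by
  obtain ⟨ΓI, hΓI⟩ := hI.1
  obtain ⟨ΓJ, hΓJ⟩ := hJ.1
  refine ⟨⟨ΓI ∪ ΓJ, ?_⟩, ?_, ?_⟩
  · rw [Set.image_union, Submodule.span_union, Submodule.coe_sup, hΓI, hΓJ]
  · rintro _ ⟨u, hu, v, hv, rfl⟩ s
    rw [mul_add]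
    exact Set.add_mem_add (hI.2.1 u hu s) (hJ.2.1 v hv s)
  · rintro _ ⟨u, hu, v, hv, rfl⟩ s
    rw [add_mul]
    exact Set.add_mem_add (hI.2.2 u hu s) (hJ.2.2 v hv s)

lemma isSerreIdeal_sInter {c : Set (Set R)} (hc : ∀ J ∈ c, IsSerreIdeal b J) :
    IsSerreIdeal b (⋂₀ c) := by
  refine ⟨?_, fun r hr s J hJ => (hc J hJ).2.1 r (hr J hJ) s,
    fun r hr s J hJ => (hc J hJ).2.2 r (hr J hJ) s⟩
  choose f hf using fun J : c => (hc J.1 J.2).1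
  refine ⟨⋂ J : c, f J, Set.ext fun x => ?_⟩
  have hmem : ∀ J : c, x ∈ J.1 ↔ ↑(b.repr x).support ⊆ f J := fun J => by
    rw [hf J, SetLike.mem_coe, b.mem_span_image]
  rw [SetLike.mem_coe, b.mem_span_image, Set.subset_iInter_iff, ← forall_congr' hmem]
  exact ⟨fun h J => h J.1 J.2, fun h J hJ => h ⟨J, hJ⟩⟩

lemma exists_serreIdeal_gt_mul_subset {M : Set R} (hM : IsSerreIdeal b M)
    (hMu : M ≠ Set.univ) (hMp : ¬IsSerrePrime b M) :
    ∃ A B : Set R, IsSerreIdeal b A ∧ IsSerreIdeal b B ∧ M ⊂ A ∧ M ⊂ B ∧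
      ∀ x ∈ A, ∀ y ∈ B, x * y ∈ M := by
  simp only [IsSerrePrime, hM, ne_eq, hMu, not_false_eq_true, true_and, not_forall,
    not_or] at hMp
  obtain ⟨A, B, hA, hB, hAB, hAM, hBM⟩ := hMp
  have hlt : ∀ {C : Set R}, IsSerreIdeal b C → ¬C ⊆ M → M ⊂ M + C := fun {C} hC hCM =>
    ssubset_of_subset_not_subset (Set.subset_add_left M hC.zero_mem)
      fun h => hCM ((Set.subset_add_right C hM.zero_mem).trans h)
  refine ⟨M + A, M + B, hM.add hA, hM.add hB, hlt hA hAM, hlt hB hBM, ?_⟩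
  rintro _ ⟨u, hu, a, ha, rfl⟩ _ ⟨v, hv, w, hw, rfl⟩
  rw [add_mul, mul_add a]
  exact hM.add_mem (hM.2.2 u hu _) (hM.add_mem (hM.2.1 v hv a) (hAB a ha w hw))

lemma isSerrePrime_sInter_of_isChain {c : Set (Set R)} (hch : IsChain (· ⊆ ·) c)
    (hc : ∀ Q ∈ c, IsSerrePrime b Q) (hne : c.Nonempty) : IsSerrePrime b (⋂₀ c) := by
  obtain ⟨Q₀, hQ₀⟩ := hne
  refine ⟨isSerreIdeal_sInter fun Q hQ => (hc Q hQ).1,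
    fun h => (hc Q₀ hQ₀).2.1 (Set.eq_univ_of_univ_subset (h ▸ Set.sInter_subset_of_mem hQ₀)),
    fun A B hA hB hAB => ?_⟩
  have hsplit : ∀ Q ∈ c, A ⊆ Q ∨ B ⊆ Q := fun Q hQ =>
    (hc Q hQ).2.2 A B hA hB fun x hx y hy => Set.sInter_subset_of_mem hQ (hAB x hx y hy)
  by_contra! ⟨hA', hB'⟩
  simp only [Set.subset_sInter_iff, not_forall] at hA' hB'
  obtain ⟨P₁, hP₁, hAP₁⟩ := hA'
  obtain ⟨P₂, hP₂, hBP₂⟩ := hB'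
  have hBP₁ := (hsplit P₁ hP₁).resolve_left hAP₁
  have hAP₂ := (hsplit P₂ hP₂).resolve_right hBP₂
  rcases hch.total hP₁ hP₂ with h12 | h21
  · exact hBP₂ (hBP₁.trans h12)
  · exact hAP₁ (hAP₂.trans h21)

lemma minimal_serrePrime_iff {I P : Set R} :
    Minimal (fun Q => IsSerrePrime b Q ∧ I ⊆ Q) P ↔
      IsSerrePrime b P ∧ I ⊆ P ∧ ∀ Q, IsSerrePrime b Q → I ⊆ Q → Q ⊆ P → Q = P := by
  simp only [minimal_iff, and_assoc, and_imp, eq_comm (a := P)]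

lemma exists_minimal_serrePrime_subset {I P : Set R} (hP : IsSerrePrime b P) (hIP : I ⊆ P) :
    ∃ P' ⊆ P, Minimal (fun Q => IsSerrePrime b Q ∧ I ⊆ Q) P' :=
  zorn_superset_nonempty {Q | IsSerrePrime b Q ∧ I ⊆ Q}
    (fun c hcS hch ⟨Q₀, hQ₀⟩ => ⟨⋂₀ c,
      ⟨isSerrePrime_sInter_of_isChain hch (fun _ hQ => (hcS hQ).1) ⟨Q₀, hQ₀⟩,
        Set.subset_sInter fun _ hQ => (hcS hQ).2⟩,
      fun _ => Set.sInter_subset_of_mem⟩) P ⟨hP, hIP⟩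

end SerreIdeals

section Finiteness

variable [NonUnitalRing R] (b : Module.Basis Γ ℤ R)

abbrev SerreIdeal : Type _ := {J : Set R // IsSerreIdeal b J}

lemma wellFoundedGT_serreIdeal
    (hacc : ∀ c : ℕ → Set R, (∀ n, IsSerreIdeal b (c n)) → (∀ n, c n ⊆ c (n + 1)) →
      ∃ N, ∀ n, N ≤ n → c n = c N) :
    WellFoundedGT (SerreIdeal b) := by
  refine wellFoundedGT_iff_monotone_chain_condition.mpr fun a => ?_
  obtain ⟨N, hN⟩ := hacc (fun n => (a n).1) (fun n => (a n).2)
    fun n => a.monotone n.le_succ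
  exact ⟨N, fun m hm => Subtype.ext (hN m hm).symm⟩

def HasFiniteSerrePrimeCover (J : Set R) : Prop :=
  ∃ s : Set (Set R), s.Finite ∧ (∀ p ∈ s, IsSerrePrime b p ∧ J ⊆ p) ∧
    ∀ Q, IsSerrePrime b Q → J ⊆ Q → ∃ p ∈ s, p ⊆ Q

variable {b}

lemma HasFiniteSerrePrimeCover.of_serrePrime {P : Set R} (hP : IsSerrePrime b P) :
    HasFiniteSerrePrimeCover b P :=
  ⟨{P}, Set.finite_singleton P, by simp [hP], fun _ _ hPQ => ⟨P, rfl, hPQ⟩⟩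

lemma hasFiniteSerrePrimeCover_univ : HasFiniteSerrePrimeCover b (Set.univ : Set R) :=
  ⟨∅, Set.finite_empty, by simp,
    fun _ hQ hQu => (hQ.2.1 (Set.eq_univ_of_univ_subset hQu)).elim⟩

lemma HasFiniteSerrePrimeCover.of_union {J A B : Set R} (hJA : J ⊆ A) (hJB : J ⊆ B)
    (hA : HasFiniteSerrePrimeCover b A) (hB : HasFiniteSerrePrimeCover b B)
    (hsplit : ∀ Q, IsSerrePrime b Q → J ⊆ Q → A ⊆ Q ∨ B ⊆ Q) :
    HasFiniteSerrePrimeCover b J := by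
  obtain ⟨s, hsf, hsm, hsc⟩ := hA
  obtain ⟨t, htf, htm, htc⟩ := hB
  refine ⟨s ∪ t, hsf.union htf, ?_, fun Q hQ hJQ => ?_⟩
  · rintro p (hp | hp)
    · exact ⟨(hsm p hp).1, hJA.trans (hsm p hp).2⟩
    · exact ⟨(htm p hp).1, hJB.trans (htm p hp).2⟩
  · rcases hsplit Q hQ hJQ with hAQ | hBQ
    · obtain ⟨p, hp, hpQ⟩ := hsc Q hQ hAQ
      exact ⟨p, Or.inl hp, hpQ⟩
    · obtain ⟨p, hp, hpQ⟩ := htc Q hQ hBQ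
      exact ⟨p, Or.inr hp, hpQ⟩

lemma hasFiniteSerrePrimeCover [WellFoundedGT (SerreIdeal b)] (J : SerreIdeal b) :
    HasFiniteSerrePrimeCover b J.1 := by
  induction J using WellFoundedGT.induction with
  | _ J ih =>
  obtain ⟨M, hM⟩ := J
  by_cases hMp : IsSerrePrime b M
  · exact .of_serrePrime hMp
  by_cases hMu : M = Set.univ
  · exact hMu ▸ hasFiniteSerrePrimeCover_univ
  obtain ⟨A, B, hA, hB, hMA, hMB, hAB⟩ := exists_serreIdeal_gt_mul_subset hM hMu hMp
  exact .of_union hMA.subset hMB.subset (ih ⟨A, hA⟩ hMA) (ih ⟨B, hB⟩ hMB)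
    fun Q hQ hMQ => hQ.2.2 A B hA hB fun x hx y hy => hMQ (hAB x hx y hy)

lemma HasFiniteSerrePrimeCover.finite_minimal {J : Set R} (hJ : HasFiniteSerrePrimeCover b J) :
    {P | Minimal (fun Q => IsSerrePrime b Q ∧ J ⊆ Q) P}.Finite := by
  obtain ⟨s, hsf, hsm, hsc⟩ := hJ
  refine hsf.subset fun P (hP : Minimal (fun Q => IsSerrePrime b Q ∧ J ⊆ Q) P) => ?_
  obtain ⟨p, hps, hpP⟩ := hsc P hP.1.1 hP.1.2
  exact hP.eq_of_subset (hsm p hps) hpP ▸ hps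

end Finiteness

theorem exists_minimal_serrePrime_and_finiteness_general
    [NonUnitalRing R] (b : Module.Basis Γ ℤ R)
    (hacc : ∀ c : ℕ → Set R, (∀ n, IsSerreIdeal b (c n)) → (∀ n, c n ⊆ c (n + 1)) →
      ∃ N, ∀ n, N ≤ n → c n = c N)
    (I : Set R) (hI : IsSerreIdeal b I)
    (P : Set R) (hP : IsSerrePrime b P) (hIP : I ⊆ P) :
    (∃ P' : Set R, IsSerrePrime b P' ∧ I ⊆ P' ∧ P' ⊆ P ∧
      ∀ Q : Set R, IsSerrePrime b Q → I ⊆ Q → Q ⊆ P' → Q = P') ∧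
    Set.Finite {P' : Set R | IsSerrePrime b P' ∧ I ⊆ P' ∧
      ∀ Q : Set R, IsSerrePrime b Q → I ⊆ Q → Q ⊆ P' → Q = P'} := by
  have := wellFoundedGT_serreIdeal b hacc
  obtain ⟨P', hP'P, hmin⟩ := exists_minimal_serrePrime_subset hP hIP
  obtain ⟨hP', hIP', hminP'⟩ := minimal_serrePrime_iff.mp hmin
  refine ⟨⟨P', hP', hIP', hP'P, hminP'⟩, ?_⟩
  simpa only [minimal_serrePrime_iff] using (hasFiniteSerrePrimeCover ⟨I, hI⟩).finite_minimal

/-- in a `ℤ₊`-ring with the ACC on Serre ideals, for a proper Serre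
ideal `I` and a Serre prime `P ⊇ I` there is a minimal Serre prime `P'` over `I`
with `I ⊆ P' ⊆ P`; moreover there are only finitely many Serre primes minimal
over `I`. -/
theorem exists_minimal_serrePrime_and_finiteness
    [NonUnitalRing R] (b : Module.Basis Γ ℤ R) (hpos : PosBasis b)
    (hacc : ∀ c : ℕ → Set R, (∀ n, IsSerreIdeal b (c n)) → (∀ n, c n ⊆ c (n + 1)) →
      ∃ N, ∀ n, N ≤ n → c n = c N)
    (I : Set R) (hI : IsSerreIdeal b I) (hproper : I ≠ Set.univ)
    (P : Set R) (hP : IsSerrePrime b P) (hIP : I ⊆ P) :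
    (∃ P' : Set R, IsSerrePrime b P' ∧ I ⊆ P' ∧ P' ⊆ P ∧
      ∀ Q : Set R, IsSerrePrime b Q → I ⊆ Q → Q ⊆ P' → Q = P') ∧
    Set.Finite {P' : Set R | IsSerrePrime b P' ∧ I ⊆ P' ∧
      ∀ Q : Set R, IsSerrePrime b Q → I ⊆ Q → Q ⊆ P' → Q = P'} :=
  exists_minimal_serrePrime_and_finiteness_general b hacc I hI P hP hIP
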